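/- arXiv:1912.06966 — 6 statements merged into one kernel-verified Lean document; each statement's English description precedes it below -/
import Mathlib

section
/- Let G be a finite simple graph, let S ⊆ V(G), and let v ∈ V(G) ∖ S be a vertex of degree exactly 1 in G. Then for every set X ⊆ V(G) ∖ S, the graph G − X is an r-pseudoforest if and only if (G − v) − (X ∖ {v}) is an r-pseudoforest. In particular, the instances (G, S, k, r) and (G − v, S, k, r) of Disjoint r-pseudoforest Deletion have the same answer. -/
/-- A graph is an `r`-pseudoforest if every connected component can be made into a forest
by deleting at most `r` edges. -/
def IsRPseudoforest {V : Type*} (G : SimpleGraph V) (r : ℕ) : Prop :=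
  ∀ c : G.ConnectedComponent, ∃ F : Finset (Sym2 V),
    F.card ≤ r ∧ ↑F ⊆ G.edgeSet ∧ ((G.deleteEdges ↑F).induce c.supp).IsAcyclic

/-!
Induced subgraphs of an `r`-pseudoforest are `r`-pseudoforests: a component of the subgraph sits
inside a component of the whole graph, and the edges deleted there pull back. Conversely, a vertex
with at most one neighbour lies on no cycle and on no path between two other vertices, so deleting
it splits no component; the edges deleted from a component of `G - v` therefore also break every
cycle of the corresponding component of `G`.
-/

namespace SimpleGraph

variable {V : Type*} {G H : SimpleGraph V}

namespace Walk

variable {u x : V}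

lemma IsCycle.induce {s : Set V} {p : G.Walk u u} (hp : p.IsCycle) (hs : ∀ x ∈ p.support, x ∈ s) :
    (p.induce s hs).IsCycle := by
  rw [← isCycle_map_iff_of_injective (f := (Embedding.induce (G := G) s).toHom)
    (Embedding.induce (G := G) s).injective, map_induce]
  exact hp

lemma IsCycle.notMem_support_of_subsingleton_neighborSet {p : G.Walk u u} (hp : p.IsCycle)
    (hx : (G.neighborSet x).Subsingleton) : x ∉ p.support := by
  classical
  intro hxp
  have hq := hp.rotate hxp
  have hnil : ¬(p.rotate x hxp).Nil := fun h => hq.ne_nil h.eq_nil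
  exact hq.snd_ne_penultimate (hx (adj_snd hnil) (adj_penultimate hnil).symm)

end Walk

lemma subsingleton_neighborSet_induce {s : Set V} {x : s} (hx : (G.neighborSet x).Subsingleton) :
    ((G.induce s).neighborSet x).Subsingleton :=
  fun _ ha _ hb => Subtype.ext (hx ha hb)

lemma Reachable.induce_of_subsingleton_neighborSet {s : Set V}
    (hs : ∀ x ∉ s, (G.neighborSet x).Subsingleton) {u w : V} (hu : u ∈ s) (hw : w ∈ s)
    (h : G.Reachable u w) : (G.induce s).Reachable ⟨u, hu⟩ ⟨w, hw⟩ := by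
  obtain ⟨p, hp⟩ := h.exists_isPath
  refine ⟨p.induce s fun x hxp => ?_⟩
  by_contra hxs
  exact hp.isTrail.not_mem_support_of_subsingleton_neighborSet (by grind) (by grind) (hs x hxs) hxp

lemma isAcyclic_induce_supp_iff (hHG : H ≤ G) (c : G.ConnectedComponent) :
    (H.induce c.supp).IsAcyclic ↔ ∀ u ∈ c.supp, ∀ p : H.Walk u u, ¬p.IsCycle := by
  constructor
  · classical
    intro hc u hu p hp
    have hsupp : ∀ x ∈ p.support, x ∈ c.supp := fun x hx => by
      rw [ConnectedComponent.mem_supp_iff] at hu ⊢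
      exact hu ▸ ConnectedComponent.eq.mpr ((p.takeUntil x hx).reachable.mono hHG).symm
    exact hc _ (hp.induce hsupp)
  · intro h u p hp
    exact h u u.2 _ (hp.map (f := (Embedding.induce (G := H) c.supp).toHom)
      (Embedding.induce (G := H) c.supp).injective)

end SimpleGraph

section

open SimpleGraph

variable {V W : Type*} {G : SimpleGraph V} {r : ℕ}

lemma isRPseudoforest_iff : IsRPseudoforest G r ↔ ∀ c : G.ConnectedComponent,
    ∃ F : Finset (Sym2 V), F.card ≤ r ∧ ↑F ⊆ G.edgeSet ∧
      ∀ u ∈ c.supp, ∀ p : (G.deleteEdges ↑F).Walk u u, ¬p.IsCycle := by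
  simp only [IsRPseudoforest, isAcyclic_induce_supp_iff (G.deleteEdges_le _)]

lemma IsRPseudoforest.comap {H : SimpleGraph W} (f : H →g G) (hf : Function.Injective f)
    (h : IsRPseudoforest G r) : IsRPseudoforest H r := by
  classical
  rw [isRPseudoforest_iff] at h ⊢
  intro c
  obtain ⟨F, hFr, hFG, hF⟩ := h (c.map f)
  set F' := (F.preimage (Sym2.map f) (Sym2.map.injective hf).injOn).filter (· ∈ H.edgeSet)
  let φ : H.deleteEdges F' →g G.deleteEdges F :=
    { toFun := f
      map_rel' := fun {a b} hab => by
        simp only [deleteEdges_adj, Finset.mem_coe, F', Finset.mem_filter, Finset.mem_preimage,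
          Sym2.map_mk, mem_edgeSet, not_and] at hab ⊢
        exact ⟨f.map_adj hab.1, fun hmem => hab.2 hmem hab.1⟩ }
  refine ⟨F', ?_, fun e he => (Finset.mem_filter.mp he).2, fun u hu p hp => ?_⟩
  · calc F'.card ≤ (F.preimage (Sym2.map f) _).card := Finset.card_filter_le _ _
      _ ≤ F.card := by rw [Finset.card_preimage]; exact Finset.card_filter_le _ _
      _ ≤ r := hFr
  · refine hF (f u) ?_ (p.map φ) (hp.map (f := φ) hf)
    rw [ConnectedComponent.mem_supp_iff] at hu ⊢
    rw [← hu, ConnectedComponent.map_mk]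

lemma IsRPseudoforest.of_induce {s : Set V} (hs : ∀ x ∉ s, (G.neighborSet x).Subsingleton)
    (h : IsRPseudoforest (G.induce s) r) : IsRPseudoforest G r := by
  rw [isRPseudoforest_iff] at h ⊢
  intro c
  have hcycle : ∀ (F : Set (Sym2 V)) (u : V) (p : (G.deleteEdges F).Walk u u), p.IsCycle →
      ∀ x ∈ p.support, x ∈ s := fun F u p hp x hx => by
    by_contra hxs
    exact hp.notMem_support_of_subsingleton_neighborSet
      ((hs x hxs).anti (neighborSet_mono (G.deleteEdges_le F) x)) hx
  by_cases hcs : ∃ u ∈ c.supp, u ∈ s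
  · obtain ⟨u, huc, hus⟩ := hcs
    obtain ⟨F', hF'r, hF'G, hF'⟩ := h ((G.induce s).connectedComponentMk ⟨u, hus⟩)
    set F := F'.map (Function.Embedding.subtype (· ∈ s)).sym2Map
    let φ : (G.deleteEdges F).induce s →g (G.induce s).deleteEdges F' :=
      { toFun := id
        map_rel' := fun {a b} hab => by
          simp only [comap_adj, Function.Embedding.coe_subtype, deleteEdges_adj, Finset.mem_coe,
            F] at hab ⊢
          exact ⟨hab.1, fun hmem => hab.2 (Finset.mem_map_of_mem _ hmem)⟩ }
    refine ⟨F, by simpa [F] using hF'r, ?_, fun w hwc p hp => ?_⟩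
    · intro e he
      obtain ⟨e', he', rfl⟩ := Finset.mem_map.mp he
      exact (Embedding.induce (G := G) s).toHom.map_mem_edgeSet (hF'G he')
    · have hws := hcycle F w p hp w p.start_mem_support
      refine hF' ⟨w, hws⟩ ?_ ((p.induce s (hcycle F w p hp)).map φ)
        ((hp.induce _).map (f := φ) Function.injective_id)
      exact ConnectedComponent.eq.mpr (Reachable.induce_of_subsingleton_neighborSet hs hws hus
        (c.reachable_of_mem_supp hwc huc))
  · push Not at hcs
    exact ⟨∅, by simp, by simp,
      fun w hwc p hp => hcs w hwc (hcycle _ w p hp w p.start_mem_support)⟩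

theorem isRPseudoforest_iff_of_embedding {H : SimpleGraph W} (f : H ↪g G)
    (hf : ∀ x ∉ Set.range f, (G.neighborSet x).Subsingleton) :
    IsRPseudoforest H r ↔ IsRPseudoforest G r :=
  ⟨fun h => .of_induce hf (h.comap f.isoInduceRange.symm.toHom f.isoInduceRange.symm.injective),
    fun h => h.comap f.toHom f.injective⟩

theorem isRPseudoforest_induce_compl_insert_iff {v : V} (hv : (G.neighborSet v).Subsingleton)
    (X : Set V) :
    IsRPseudoforest (G.induce (insert v X)ᶜ) r ↔ IsRPseudoforest (G.induce Xᶜ) r := by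
  refine isRPseudoforest_iff_of_embedding
    (G.induceHomOfLE (Set.compl_subset_compl.mpr (Set.subset_insert v X))) fun x hx => ?_
  obtain rfl : (x : V) = v := by
    by_contra hxv
    exact hx ⟨⟨x, by simp [hxv, Set.notMem_of_mem_compl x.2]⟩, rfl⟩
  exact subsingleton_neighborSet_induce hv

end

theorem degree_one_reduction_general {V : Type*} (G : SimpleGraph V) (r k : ℕ)
    (S : Set V) (v : V) (hdeg : (G.neighborSet v).ncard = 1) :
    (∀ X : Set V, X ⊆ Sᶜ →
      (IsRPseudoforest (G.induce Xᶜ) r ↔ IsRPseudoforest (G.induce (insert v X)ᶜ) r))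
    ∧
    ((∃ X : Set V, X ⊆ Sᶜ ∧ X.ncard ≤ k ∧ IsRPseudoforest (G.induce Xᶜ) r) ↔
      (∃ X : Set V, X ⊆ Sᶜ ∩ {v}ᶜ ∧ X.ncard ≤ k ∧
        IsRPseudoforest (G.induce (insert v X)ᶜ) r)) := by
  have hv : (G.neighborSet v).Subsingleton := by
    obtain ⟨u, hu⟩ := Set.ncard_eq_one.mp hdeg
    exact hu ▸ Set.subsingleton_singleton
  have hiff (X : Set V) :
      IsRPseudoforest (G.induce Xᶜ) r ↔ IsRPseudoforest (G.induce (insert v X)ᶜ) r :=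
    (isRPseudoforest_induce_compl_insert_iff hv X).symm
  refine ⟨fun X _ => hiff X, ?_⟩
  constructor
  · rintro ⟨X, hXS, hXk, hX⟩
    refine ⟨X \ {v}, fun x hx => ⟨hXS hx.1, hx.2⟩, (Set.ncard_sdiff_singleton_le X v).trans hXk, ?_⟩
    rwa [Set.insert_sdiff_singleton, ← hiff]
  · rintro ⟨X, hXS, hXk, hX⟩
    exact ⟨X, fun x hx => (hXS hx).1, hXk, (hiff X).mpr hX⟩

/-- If `v ∉ S` has degree exactly `1` in `G`, then for every `X ⊆ V(G) ∖ S`, the graph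
`G − X` is an `r`-pseudoforest iff `(G − v) − (X ∖ {v})` is an `r`-pseudoforest
(the latter being the subgraph of `G` induced on the complement of `{v} ∪ X`).
In particular, the instances `(G, S, k, r)` and `(G − v, S, k, r)` of
Disjoint r-pseudoforest Deletion have the same answer. -/
theorem degree_one_reduction {V : Type*} [Fintype V] (G : SimpleGraph V) (r k : ℕ)
    (S : Set V) (v : V) (hvS : v ∉ S) (hdeg : (G.neighborSet v).ncard = 1) :
    (∀ X : Set V, X ⊆ Sᶜ →
      (IsRPseudoforest (G.induce Xᶜ) r ↔ IsRPseudoforest (G.induce (insert v X)ᶜ) r))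
    ∧
    ((∃ X : Set V, X ⊆ Sᶜ ∧ X.ncard ≤ k ∧ IsRPseudoforest (G.induce Xᶜ) r) ↔
      (∃ X : Set V, X ⊆ Sᶜ ∩ {v}ᶜ ∧ X.ncard ≤ k ∧
        IsRPseudoforest (G.induce (insert v X)ᶜ) r)) :=
  degree_one_reduction_general G r k S v hdeg
end

section
/- Let G be a finite simple graph and S ⊆ V(G) such that G − S is an r-pseudoforest. Let C be a connected component of G − S such that exactly one edge of G joins V(C) to S, say the edge uv with u ∈ V(C) and v ∈ S. If X ⊆ V(G) ∖ S is an r-pseudoforest deletion set of G with X ∩ V(C) ≠ ∅, then (X ∖ V(C)) ∪ {u} is also an r-pseudoforest deletion set of G, disjoint from S and of size at most |X|. -/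
open SimpleGraph Set

namespace SimpleGraph

variable {V : Type*} {G : SimpleGraph V} {r : ℕ}

def AcyclicAfterDeletingEdges (G : SimpleGraph V) (r : ℕ) (T : Set V) : Prop :=
  ∃ F : Finset (Sym2 V), F.card ≤ r ∧ ↑F ⊆ G.edgeSet ∧ ((G.deleteEdges ↑F).induce T).IsAcyclic

lemma AcyclicAfterDeletingEdges.mono {T T' : Set V} (h : G.AcyclicAfterDeletingEdges r T)
    (hT : T' ⊆ T) : G.AcyclicAfterDeletingEdges r T' := by
  obtain ⟨F, hcard, hF, hac⟩ := h
  exact ⟨F, hcard, hF, hac.embedding (induceHomOfLE _ hT)⟩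

noncomputable def deleteEdgesInduceIso (A : Set V) (s : Set A) (F : Set (Sym2 A)) :
    ((G.induce A).deleteEdges F).induce s ≃g
      (G.deleteEdges (Sym2.map Subtype.val '' F)).induce (Subtype.val '' s) where
  toEquiv := Equiv.Set.image Subtype.val s Subtype.val_injective
  map_rel_iff' := by
    intro a b
    simp only [comap_adj, Function.Embedding.coe_subtype, deleteEdges_adj,
      Equiv.Set.image_apply, ← Sym2.map_mk Subtype.val,
      (Sym2.map.injective Subtype.val_injective).mem_set_image]

lemma acyclicAfterDeletingEdges_induce_iff {A : Set V} {s : Set A} :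
    (G.induce A).AcyclicAfterDeletingEdges r s ↔
      G.AcyclicAfterDeletingEdges r (Subtype.val '' s) := by
  classical
  have hval : Function.Injective (Sym2.map (Subtype.val : A → V)) :=
    Sym2.map.injective Subtype.val_injective
  constructor
  · rintro ⟨F, hcard, hF, hac⟩
    refine ⟨F.image (Sym2.map Subtype.val), Finset.card_image_le.trans hcard, ?_, ?_⟩
    · intro _ he
      obtain ⟨e, heF, rfl⟩ := Finset.mem_image.1 he
      exact (Embedding.induce A).map_mem_edgeSet_iff.2 (hF heF)
    · rw [Finset.coe_image]
      exact hac.embedding (deleteEdgesInduceIso A s F).symm.toEmbedding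
  · rintro ⟨F, hcard, hF, hac⟩
    let F₀ := F.preimage (Sym2.map Subtype.val) hval.injOn
    refine ⟨F₀, ?_, ?_, ?_⟩
    · exact (F.card_preimage _ _).trans_le ((Finset.card_filter_le _ _).trans hcard)
    · intro e he
      exact (Embedding.induce A).map_mem_edgeSet_iff.1 (hF (Finset.mem_preimage.1 he))
    · let f : ((G.induce A).deleteEdges F₀).induce s →g
          (G.deleteEdges F).induce (Subtype.val '' s) :=
        { toFun := fun x => ⟨x.1.1, mem_image_of_mem _ x.2⟩
          map_rel' := fun {x y} hxy => by
            simpa [F₀, Finset.mem_preimage] using hxy }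
      exact hac.comap f fun x y hxy => by simpa [f, Subtype.ext_iff] using hxy


lemma isRPseudoforest_induce_of_forall_subset {A : Set V}
    (h : ∀ c : (G.induce A).ConnectedComponent, ∃ B : Set V, IsRPseudoforest (G.induce B) r ∧
      ∃ d : (G.induce B).ConnectedComponent, Subtype.val '' c.supp ⊆ Subtype.val '' d.supp) :
    IsRPseudoforest (G.induce A) r := by
  intro c
  obtain ⟨B, hB, d, hcd⟩ := h c
  exact acyclicAfterDeletingEdges_induce_iff.2
    ((acyclicAfterDeletingEdges_induce_iff.1 (hB d)).mono hcd)

lemma Reachable.mem_of_adj_closed {P : Set V} (hP : ∀ x y, G.Adj x y → x ∈ P → y ∈ P) {a b : V}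
    (h : G.Reachable a b) (ha : a ∈ P) : b ∈ P := by
  rw [reachable_iff_reflTransGen] at h
  induction h with
  | refl => exact ha
  | tail _ hxy ih => exact hP _ _ hxy ih

namespace ConnectedComponent

lemma mem_image_supp_of_adj {A : Set V} (C : (G.induce A).ConnectedComponent) {x y : V}
    (hx : x ∈ Subtype.val '' C.supp) (hy : y ∈ A) (hxy : G.Adj x y) :
    y ∈ Subtype.val '' C.supp := by
  obtain ⟨x, hxC, rfl⟩ := hx
  exact ⟨⟨y, hy⟩, C.mem_supp_of_adj_mem_supp hxC hxy, rfl⟩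

lemma image_supp_subset_or_disjoint {A P : Set V} (c : (G.induce A).ConnectedComponent)
    (hP : ∀ x ∈ A, ∀ y ∈ A, G.Adj x y → x ∈ P → y ∈ P) :
    Subtype.val '' c.supp ⊆ P ∨ Disjoint (Subtype.val '' c.supp) P := by
  by_cases hmeet : ∃ x ∈ c.supp, x.1 ∈ P
  · obtain ⟨x, hx, hxP⟩ := hmeet
    left
    rintro _ ⟨y, hy, rfl⟩
    exact (c.reachable_of_mem_supp hx hy).mem_of_adj_closed (P := Subtype.val ⁻¹' P)
      (fun x y hxy => hP x x.2 y y.2 hxy) hxP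
  · right
    rw [Set.disjoint_left]
    rintro _ ⟨y, hy, rfl⟩ hyP
    exact hmeet ⟨y, hy, hyP⟩

lemma exists_image_supp_subset {A B : Set V} (c : (G.induce A).ConnectedComponent)
    (hB : Subtype.val '' c.supp ⊆ B) :
    ∃ d : (G.induce B).ConnectedComponent, Subtype.val '' c.supp ⊆ Subtype.val '' d.supp := by
  let f : c.toSimpleGraph →g G.induce B :=
    { toFun := fun x => ⟨x.1.1, hB (mem_image_of_mem _ x.2)⟩, map_rel' := id }
  obtain ⟨w⟩ := c.connected_toSimpleGraph.nonempty
  refine ⟨(G.induce B).connectedComponentMk (f w), ?_⟩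
  rintro _ ⟨x, hx, rfl⟩
  exact ⟨f ⟨x, hx⟩,
    ConnectedComponent.sound ((c.connected_toSimpleGraph.preconnected _ _).map f), rfl⟩

end ConnectedComponent

end SimpleGraph

lemma Set.ncard_diff_union_singleton_le {α : Type*} {X T : Set α} (hX : X.Finite)
    (hXT : (X ∩ T).Nonempty) (u : α) : (X \ T ∪ {u}).ncard ≤ X.ncard := by
  obtain ⟨x, hxX, hxT⟩ := hXT
  calc (X \ T ∪ {u}).ncard ≤ (X \ T).ncard + 1 := by
        simpa only [ncard_singleton] using ncard_union_le (X \ T) {u}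
    _ ≤ X.ncard := ncard_lt_ncard ⟨sdiff_subset, fun h => (h hxX).2 hxT⟩ hX

theorem replace_by_attachment_vertex_general {V : Type*} [Fintype V] (G : SimpleGraph V) (r : ℕ)
    (S : Set V) (hS : IsRPseudoforest (G.induce Sᶜ) r)
    (C : (G.induce Sᶜ).ConnectedComponent) (u v : V)
    (hu : u ∈ Subtype.val '' C.supp)
    (huniq : ∀ x y : V, x ∈ Subtype.val '' C.supp → y ∈ S → G.Adj x y → x = u ∧ y = v)
    (X : Set V) (hXS : X ⊆ Sᶜ) (hX : IsRPseudoforest (G.induce Xᶜ) r)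
    (hXC : (X ∩ Subtype.val '' C.supp).Nonempty) :
    ((X \ Subtype.val '' C.supp) ∪ {u}) ⊆ Sᶜ
    ∧ ((X \ Subtype.val '' C.supp) ∪ {u}).ncard ≤ X.ncard
    ∧ IsRPseudoforest (G.induce ((X \ Subtype.val '' C.supp) ∪ {u})ᶜ) r := by
  set CV := Subtype.val '' C.supp
  have huS : u ∈ Sᶜ := by
    obtain ⟨u', -, rfl⟩ := hu
    exact u'.2
  refine ⟨union_subset (sdiff_subset.trans hXS) (singleton_subset_iff.2 huS),
    ncard_diff_union_singleton_le (toFinite X) hXC u,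
    isRPseudoforest_induce_of_forall_subset fun c => ?_⟩
  -- Edges into `S` leave `C` only at `u`, and `C` is a component of `G − S`.
  have hCV_closed :
      ∀ x ∈ (X \ CV ∪ {u})ᶜ, ∀ y ∈ (X \ CV ∪ {u})ᶜ, G.Adj x y → x ∈ CV → y ∈ CV := by
    intro x hx y _ hxy hxC
    have hyS : y ∉ S := fun hyS => hx (Or.inr (huniq x y hxC hyS hxy).1)
    exact C.mem_image_supp_of_adj hxC hyS hxy
  rcases c.image_supp_subset_or_disjoint hCV_closed with hcC | hcC
  · exact ⟨Sᶜ, hS, C, hcC⟩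
  · refine ⟨Xᶜ, hX, c.exists_image_supp_subset fun x hx hxX => ?_⟩
    obtain ⟨y, hy, rfl⟩ := hx
    exact y.2 (Or.inl ⟨hxX, disjoint_left.1 hcC ⟨y, hy, rfl⟩⟩)

/-- Let `G − S` be an `r`-pseudoforest and let `C` be a connected component of `G − S`
such that exactly one edge of `G` joins `V(C)` to `S`, namely the edge `uv` with
`u ∈ V(C)` and `v ∈ S`. If `X ⊆ V(G) ∖ S` is an `r`-pseudoforest deletion set of `G`
with `X ∩ V(C) ≠ ∅`, then `(X ∖ V(C)) ∪ {u}` is also an `r`-pseudoforest deletion set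
of `G`, disjoint from `S` and of size at most `|X|`. -/
theorem replace_by_attachment_vertex {V : Type*} [Fintype V] (G : SimpleGraph V) (r : ℕ)
    (S : Set V) (hS : IsRPseudoforest (G.induce Sᶜ) r)
    (C : (G.induce Sᶜ).ConnectedComponent) (u v : V)
    (hu : u ∈ Subtype.val '' C.supp) (hv : v ∈ S) (huv : G.Adj u v)
    (huniq : ∀ x y : V, x ∈ Subtype.val '' C.supp → y ∈ S → G.Adj x y → x = u ∧ y = v)
    (X : Set V) (hXS : X ⊆ Sᶜ) (hX : IsRPseudoforest (G.induce Xᶜ) r)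
    (hXC : (X ∩ Subtype.val '' C.supp).Nonempty) :
    ((X \ Subtype.val '' C.supp) ∪ {u}) ⊆ Sᶜ
    ∧ ((X \ Subtype.val '' C.supp) ∪ {u}).ncard ≤ X.ncard
    ∧ IsRPseudoforest (G.induce ((X \ Subtype.val '' C.supp) ∪ {u})ᶜ) r :=
  replace_by_attachment_vertex_general G r S hS C u v hu huniq X hXS hX hXC
end

section
/- Let G be a finite simple graph, Z ⊆ V(G), u ∈ Z, and k, d non-negative integers. If there exists X ⊆ V(G) ∖ Z with |X| ≤ k such that G − X is a d-quasi-forest, then at most k + d connected components of G − Z both contain a cycle and contain a vertex adjacent in G to u. -/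
/-- A graph is a `d`-quasi-forest if every connected component has a feedback vertex set
of size at most `d`. -/
def IsDQuasiForest {V : Type*} (G : SimpleGraph V) (d : ℕ) : Prop :=
  ∀ c : G.ConnectedComponent, ∃ S : Finset V, S.card ≤ d ∧ ↑S ⊆ c.supp ∧
    (G.induce (c.supp \ ↑S)).IsAcyclic

/-!
Take `X` as in the hypothesis and a feedback vertex set `S` of size at most `d` of the component
`C` of `u` in `G − X`. A cyclic component of `G − Z` adjacent to `u` that avoids `X` is a connected
subgraph of `G − X` next to `u`, hence lies inside `C`; if it also avoided `S` it would embed into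
the forest `C − S`. So every such component meets `X ∪ S`, and distinct components meet it in
distinct vertices.
-/

namespace SimpleGraph

variable {U V W : Type*}

def Embedding.induceInduce (G : SimpleGraph V) {s t : Set V} {A : Set s}
    (h : ∀ v ∈ A, (v : V) ∈ t) : (G.induce s).induce A ↪g G.induce t where
  toFun v := ⟨v.1.1, h v.1 v.2⟩
  inj' _ _ hvw := by ext; simpa using hvw
  map_rel_iff' := Iff.rfl

lemma Connected.exists_map_mem_of_not_isAcyclic {K : SimpleGraph U} {H : SimpleGraph W}
    (hK : K.Connected) (hcyc : ¬ K.IsAcyclic) (f : K ↪g H) {c : H.ConnectedComponent}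
    {S : Set W} (hS : (H.induce (c.supp \ S)).IsAcyclic) {x : U} (hx : f x ∈ c.supp) :
    ∃ y, f y ∈ S := by
  by_contra! hfS
  have hfc : ∀ y, f y ∈ c.supp := fun y => by
    rw [ConnectedComponent.mem_supp_iff] at hx ⊢
    rw [← hx, ConnectedComponent.eq]
    exact (hK.preconnected y x).map f.toHom
  let g : K ↪g H.induce (c.supp \ S) :=
    { toFun := fun y => ⟨f y, hfc y, hfS y⟩
      inj' := fun _ _ hyz => f.injective (congrArg Subtype.val hyz)
      map_rel_iff' := f.map_rel_iff }
  exact hcyc (hS.embedding g)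

lemma ncard_le_of_forall_exists_mem_supp {K : SimpleGraph W} {T : Set W} (hT : T.Finite)
    {𝒞 : Set K.ConnectedComponent} (h𝒞 : ∀ c ∈ 𝒞, ∃ v ∈ c.supp, v ∈ T) :
    𝒞.ncard ≤ T.ncard := by
  have h𝒞T : 𝒞 ⊆ K.connectedComponentMk '' T := fun c hc => by
    obtain ⟨v, hvc, hvT⟩ := h𝒞 c hc
    exact ⟨v, hvT, hvc⟩
  exact (Set.ncard_le_ncard h𝒞T (hT.image _)).trans (Set.ncard_image_le hT)

lemma exists_mem_supp_of_not_isAcyclic_of_adj (G : SimpleGraph V) {Z X : Set V} {u : V}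
    (huX : u ∉ X) {S : Set (Xᶜ : Set V)}
    (hS : ((G.induce Xᶜ).induce
      (((G.induce Xᶜ).connectedComponentMk ⟨u, huX⟩).supp \ S)).IsAcyclic)
    {c : (G.induce Zᶜ).ConnectedComponent} (hc : ¬ ((G.induce Zᶜ).induce c.supp).IsAcyclic)
    {x : (Zᶜ : Set V)} (hx : x ∈ c.supp) (hux : G.Adj u x) :
    ∃ v ∈ c.supp, (v : V) ∈ X ∨ (v : V) ∈ Subtype.val '' S := by
  by_contra! hcXS
  let f := Embedding.induceInduce G (t := Xᶜ) (A := c.supp) fun v hv => (hcXS v hv).1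
  have hfx : f ⟨x, hx⟩ ∈ ((G.induce Xᶜ).connectedComponentMk ⟨u, huX⟩).supp :=
    ConnectedComponent.connectedComponentMk_eq_of_adj hux.symm
  obtain ⟨y, hyS⟩ := c.connected_toSimpleGraph.exists_map_mem_of_not_isAcyclic hc f hS hfx
  exact (hcXS y.1 y.2).2 ⟨_, hyS, rfl⟩

end SimpleGraph

/-- If there is `X ⊆ V(G) ∖ Z` with `|X| ≤ k` such that `G − X` is a `d`-quasi-forest,
then for `u ∈ Z`, at most `k + d` connected components of `G − Z` both contain a cycle
and contain a vertex adjacent in `G` to `u`. -/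
theorem few_cyclic_components_adjacent {V : Type*} [Fintype V] (G : SimpleGraph V)
    (k d : ℕ) (Z : Set V) (u : V) (hu : u ∈ Z)
    (h : ∃ X : Set V, X ⊆ Zᶜ ∧ X.ncard ≤ k ∧ IsDQuasiForest (G.induce Xᶜ) d) :
    {c : (G.induce Zᶜ).ConnectedComponent |
      ¬ ((G.induce Zᶜ).induce c.supp).IsAcyclic ∧ ∃ x ∈ c.supp, G.Adj u ↑x}.ncard
      ≤ k + d := by
  obtain ⟨X, hXZ, hXk, hX⟩ := h
  have huX : u ∉ X := fun huX => hXZ huX hu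
  obtain ⟨S, hSd, -, hS⟩ := hX ((G.induce Xᶜ).connectedComponentMk ⟨u, huX⟩)
  set T : Set V := X ∪ Subtype.val '' (S : Set (Xᶜ : Set V))
  have hTcard : T.ncard ≤ k + d := by
    refine (Set.ncard_union_le _ _).trans (add_le_add hXk ?_)
    exact (Set.ncard_image_le (Set.toFinite _)).trans (by simpa using hSd)
  calc _ ≤ (Subtype.val ⁻¹' T : Set (Zᶜ : Set V)).ncard :=
        SimpleGraph.ncard_le_of_forall_exists_mem_supp (Set.toFinite _) <| by
          rintro c ⟨hc, x, hx, hux⟩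
          exact G.exists_mem_supp_of_not_isAcyclic_of_adj huX hS hc hx hux
    _ ≤ T.ncard := Set.ncard_le_ncard_of_injOn _ (fun _ h => h) Subtype.val_injective.injOn
        (Set.toFinite _)
    _ ≤ k + d := hTcard
end

section
/- Let G be a finite simple graph, k, d non-negative integers, and Z ⊆ V(G) with |Z| ≤ k + 1 such that G − Z is a d-quasi-forest. If there exists X ⊆ V(G) ∖ Z with |X| ≤ k such that G − X is a d-quasi-forest, then at most 2(k + 1) + d connected components C of G − Z satisfy |N_G(V(C)) ∩ Z| ≥ d + 2 (i.e., have at least d + 2 neighbors in Z). -/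
/-! Components of `G - Z` that meet `X` are disjoint, so there are at most `|X| ≤ k` of them.
Every other component `C` is a connected subgraph of `G - X`, hence lies in a component `D` of
`G - X`; let `S` be a feedback vertex set of `D`. At most `|S \ Z|` of the components `C` inside `D`
meet `S`. The others are disjoint subtrees of the forest `D - S`, and disjoint subtrees
`A₁, …, Aᵣ` of a forest and a set `W` disjoint from them satisfy `∑ |N(Aᵢ) ∩ W| ≤ r + |W|`:
the edges inside the `Aᵢ`, together with one edge from `Aᵢ` to each of its neighbours in `W`, are
distinct edges of the forest induced on `⋃ Aᵢ ∪ W`. Taking `W = (Z ∩ D) \ S`, in which each such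
`C` has at least `d + 2 - |Z ∩ S|` neighbours, at most `|Z ∩ D|` components `C` lie inside `D`.
Summing over `D`, at most `|Z| ≤ k + 1` components avoid `X`. -/

theorem Set.sym2_mono {α : Type*} {s t : Set α} (h : s ⊆ t) : s.sym2 ⊆ t.sym2 :=
  fun _ hz => Set.mem_sym2_iff_subset.2 ((Set.mem_sym2_iff_subset.1 hz).trans h)

theorem Set.disjoint_sym2 {α : Type*} {s t : Set α} (h : Disjoint s t) :
    Disjoint s.sym2 t.sym2 := by
  rw [Set.disjoint_iff_inter_eq_empty, ← Set.sym2_inter, h.inter_eq, Set.sym2_empty]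

theorem Set.PairwiseDisjoint.ncard_le_ncard_of_inter_nonempty {α ι : Type*} {s : Set ι}
    {A : ι → Set α} {B : Set α} (hdisj : s.PairwiseDisjoint A)
    (hB : ∀ i ∈ s, (A i ∩ B).Nonempty) (hBfin : B.Finite) : s.ncard ≤ B.ncard := by
  obtain hα | hα := isEmpty_or_nonempty α
  · rw [Set.eq_empty_of_forall_notMem fun i hi => (hB i hi).elim fun a _ => isEmptyElim a]
    simp
  choose! b hbA hbB using hB
  refine Set.ncard_le_ncard_of_injOn b hbB (fun i hi j hj hij => ?_) hBfin
  exact hdisj.elim hi hj (Set.not_disjoint_iff.2 ⟨b i, hbA i hi, hij ▸ hbA j hj⟩)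

theorem Set.PairwiseDisjoint.sum_ncard_inter_le {α ι : Type*} {s : Finset ι} {A : ι → Set α}
    (hdisj : (s : Set ι).PairwiseDisjoint A) {Z : Set α} (hZ : Z.Finite) :
    ∑ i ∈ s, (Z ∩ A i).ncard ≤ Z.ncard := by
  rw [← finsum_mem_coe_finset, ← Set.Finite.ncard_biUnion s.finite_toSet
    (fun _ _ => hZ.subset Set.inter_subset_left) (hdisj.mono fun _ => Set.inter_subset_right)]
  exact Set.ncard_le_ncard (Set.iUnion₂_subset fun _ _ => Set.inter_subset_left) hZ

namespace SimpleGraph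

variable {V : Type*} {G : SimpleGraph V}

theorem IsAcyclic.card_edgeSet_le [Finite V] (hG : G.IsAcyclic) :
    Nat.card G.edgeSet ≤ Nat.card V := by
  classical
  cases nonempty_fintype V
  cases isEmpty_or_nonempty V
  · simp
  obtain ⟨T, hGT, -, hT⟩ := connected_top.exists_isTree_le_of_le_of_isAcyclic le_top hG
  have hT_card := hT.card_edgeFinset
  calc Nat.card G.edgeSet ≤ Nat.card T.edgeSet :=
        Nat.card_mono (Set.toFinite _) (edgeSet_mono hGT)
    _ ≤ Nat.card V := by
      rw [Nat.card_eq_fintype_card, Nat.card_eq_fintype_card, ← edgeFinset_card]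
      omega

theorem ncard_edgeSet_inter_sym2 (U : Set V) :
    (G.edgeSet ∩ U.sym2).ncard = Nat.card (G.induce U).edgeSet := by
  have : G.edgeSet ∩ U.sym2 = Sym2.map Subtype.val '' (G.induce U).edgeSet := by
    ext ⟨a, b⟩
    aesop (add simp [Sym2.exists, Sym2.eq_iff, adj_comm])
  rw [this, Set.ncard_image_of_injective _ (Sym2.map.injective Subtype.val_injective),
    Nat.card_coe_set_eq]

theorem ncard_edgeSet_inter_sym2_le_of_isAcyclic [Finite V] {U : Set V}
    (hU : (G.induce U).IsAcyclic) : (G.edgeSet ∩ U.sym2).ncard ≤ U.ncard := by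
  rw [ncard_edgeSet_inter_sym2, ← Nat.card_coe_set_eq]
  exact hU.card_edgeSet_le

theorem ncard_le_ncard_edgeSet_inter_sym2_add_one_of_connected {U : Set V}
    (hU : (G.induce U).Connected) : U.ncard ≤ (G.edgeSet ∩ U.sym2).ncard + 1 := by
  rw [ncard_edgeSet_inter_sym2, ← Nat.card_coe_set_eq]
  exact hU.card_vert_le_card_edgeSet_add_one

def edgesBetween (G : SimpleGraph V) (A W : Set V) : Set (Sym2 V) :=
  {e ∈ G.edgeSet | ∃ a ∈ A, ∃ w ∈ W, e = s(a, w)}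

theorem edgesBetween_subset (A W : Set V) :
    G.edgesBetween A W ⊆ G.edgeSet ∩ (A ∪ W).sym2 := by
  rintro _ ⟨he, a, ha, w, hw, rfl⟩
  exact ⟨he, Set.mk_mem_sym2_iff.2 ⟨Or.inl ha, Or.inr hw⟩⟩

theorem ncard_adj_le_ncard_edgesBetween [Finite V] {A W : Set V} (hAW : Disjoint A W) :
    {w ∈ W | ∃ x ∈ A, G.Adj w x}.ncard ≤ (G.edgesBetween A W).ncard := by
  have hN : ∀ w ∈ {w ∈ W | ∃ x ∈ A, G.Adj w x}, ∃ x ∈ A, G.Adj w x := fun _ hw => hw.2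
  choose! x hxA hadj using hN
  refine Set.ncard_le_ncard_of_injOn (fun w => s(x w, w))
    (fun w hw => ⟨(hadj w hw).symm, x w, hxA w hw, w, hw.1, rfl⟩) (fun w hw w' hw' he => ?_)
  rcases Sym2.eq_iff.1 he with ⟨-, h⟩ | ⟨h, -⟩
  · exact h
  · exact absurd (h ▸ hxA w hw) (Set.disjoint_right.1 hAW hw'.1)

theorem disjoint_edgeSet_inter_sym2_edgesBetween {A B W : Set V} (hAW : Disjoint A W) :
    Disjoint (G.edgeSet ∩ A.sym2) (G.edgesBetween B W) := by
  rw [Set.disjoint_right]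
  rintro _ ⟨-, b, -, w, hw, rfl⟩ ⟨-, he⟩
  exact Set.disjoint_right.1 hAW hw (Set.mk_mem_sym2_iff.1 he).2

theorem disjoint_edgesBetween {A B W : Set V} (hAB : Disjoint A B) (hAW : Disjoint A W) :
    Disjoint (G.edgesBetween A W) (G.edgesBetween B W) := by
  rw [Set.disjoint_left]
  rintro _ ⟨-, a, ha, w, -, rfl⟩ ⟨-, b, hb, w', hw', he⟩
  rcases Sym2.eq_iff.1 he with ⟨rfl, -⟩ | ⟨rfl, -⟩
  · exact Set.disjoint_left.1 hAB ha hb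
  · exact Set.disjoint_left.1 hAW ha hw'

theorem sum_ncard_adj_le_of_isAcyclic [Finite V] {T W : Set V} (hT : (G.induce T).IsAcyclic)
    {ι : Type*} (s : Finset ι) (A : ι → Set V) (hAT : ∀ i ∈ s, A i ⊆ T)
    (hconn : ∀ i ∈ s, (G.induce (A i)).Connected) (hdisj : (s : Set ι).PairwiseDisjoint A)
    (hWT : W ⊆ T) (hW : ∀ i ∈ s, Disjoint (A i) W) :
    ∑ i ∈ s, {w ∈ W | ∃ x ∈ A i, G.Adj w x}.ncard ≤ s.card + W.ncard := by
  set E : ι → Set (Sym2 V) := fun i => (G.edgeSet ∩ (A i).sym2) ∪ G.edgesBetween (A i) W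
  set U := (⋃ i ∈ (s : Set ι), A i) ∪ W
  have hAU : ∀ i ∈ s, A i ⊆ U := fun i hi _ ha => Or.inl (Set.mem_biUnion hi ha)
  have hU : (G.induce U).IsAcyclic :=
    hT.embedding (induceHomOfLE G (Set.union_subset (Set.iUnion₂_subset hAT) hWT))
  have hEU : (⋃ i ∈ (s : Set ι), E i) ⊆ G.edgeSet ∩ U.sym2 :=
    Set.iUnion₂_subset fun i hi => Set.union_subset
      (Set.inter_subset_inter_right _ (Set.sym2_mono (hAU i hi)))
      ((edgesBetween_subset _ _).trans (Set.inter_subset_inter_right _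
        (Set.sym2_mono (Set.union_subset (hAU i hi) Set.subset_union_right))))
  have hEdisj : (s : Set ι).PairwiseDisjoint E := fun i hi j hj hij => by
    have hAij : Disjoint (A i) (A j) := hdisj hi hj hij
    refine Set.disjoint_union_left.2 ⟨Set.disjoint_union_right.2 ⟨?_, ?_⟩,
      Set.disjoint_union_right.2 ⟨?_, disjoint_edgesBetween hAij (hW i hi)⟩⟩
    · exact (Set.disjoint_sym2 hAij).mono Set.inter_subset_right Set.inter_subset_right
    · exact disjoint_edgeSet_inter_sym2_edgesBetween (hW i hi)
    · exact (disjoint_edgeSet_inter_sym2_edgesBetween (hW j hj)).symm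
  have hE : ∀ i ∈ s,
      (A i).ncard + {w ∈ W | ∃ x ∈ A i, G.Adj w x}.ncard ≤ (E i).ncard + 1 := fun i hi => by
    rw [Set.ncard_union_eq (disjoint_edgeSet_inter_sym2_edgesBetween (hW i hi))]
    have := ncard_le_ncard_edgeSet_inter_sym2_add_one_of_connected (hconn i hi)
    have := ncard_adj_le_ncard_edgesBetween (G := G) (hW i hi)
    omega
  have hUcard : U.ncard = ∑ i ∈ s, (A i).ncard + W.ncard := by
    have hdisjW : Disjoint (⋃ i ∈ (s : Set ι), A i) W :=
      Set.disjoint_iUnion₂_left.2 fun i hi => hW i hi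
    rw [Set.ncard_union_eq hdisjW,
      Set.Finite.ncard_biUnion s.finite_toSet (fun _ _ => Set.toFinite _) hdisj,
      finsum_mem_coe_finset]
  have hEcard : ∑ i ∈ s, (E i).ncard ≤ U.ncard := calc
    ∑ i ∈ s, (E i).ncard = (⋃ i ∈ (s : Set ι), E i).ncard := by
      rw [Set.Finite.ncard_biUnion s.finite_toSet (fun _ _ => Set.toFinite _) hEdisj,
        finsum_mem_coe_finset]
    _ ≤ (G.edgeSet ∩ U.sym2).ncard := Set.ncard_le_ncard hEU
    _ ≤ U.ncard := ncard_edgeSet_inter_sym2_le_of_isAcyclic hU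
  have := Finset.sum_le_sum hE
  simp only [Finset.sum_add_distrib, Finset.sum_const, smul_eq_mul, mul_one] at this
  omega

theorem card_mul_le_of_isAcyclic_diff [Finite V] {Z D S : Set V} {m : ℕ}
    (hacyc : (G.induce (D \ S)).IsAcyclic) (hD : ∀ x ∈ D, ∀ z ∈ Z, G.Adj z x → z ∈ D)
    {ι : Type*} (s : Finset ι) (A : ι → Set V) (hAD : ∀ i ∈ s, A i ⊆ D \ S)
    (hAZ : ∀ i ∈ s, Disjoint (A i) Z) (hconn : ∀ i ∈ s, (G.induce (A i)).Connected)
    (hdisj : (s : Set ι).PairwiseDisjoint A)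
    (hmany : ∀ i ∈ s, m ≤ {z ∈ Z | ∃ x ∈ A i, G.Adj z x}.ncard) :
    s.card * m ≤ s.card * ((Z ∩ S).ncard + 1) + ((Z ∩ D) \ S).ncard := by
  set W := (Z ∩ D) \ S
  have hsum := sum_ncard_adj_le_of_isAcyclic (W := W) hacyc s A hAD hconn hdisj
    (fun w hw => ⟨hw.1.2, hw.2⟩) fun i hi => (hAZ i hi).mono_right fun w hw => hw.1.1
  have hm : ∀ i ∈ s, m ≤ {w ∈ W | ∃ x ∈ A i, G.Adj w x}.ncard + (Z ∩ S).ncard := by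
    intro i hi
    refine (hmany i hi).trans ((Set.ncard_le_ncard ?_).trans (Set.ncard_union_le _ _))
    rintro z ⟨hz, x, hx, hadj⟩
    by_cases hzS : z ∈ S
    · exact Or.inr ⟨hz, hzS⟩
    · exact Or.inl ⟨⟨⟨hz, hD x (hAD i hi hx).1 z hz hadj⟩, hzS⟩, x, hx, hadj⟩
  have := Finset.sum_le_sum hm
  rw [Finset.sum_const, smul_eq_mul, Finset.sum_add_distrib, Finset.sum_const, smul_eq_mul]
    at this
  linarith

theorem ncard_le_ncard_inter_of_isAcyclic_diff [Finite V] {Z D S : Set V} {d : ℕ}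
    (hSD : S ⊆ D) (hS : S.ncard ≤ d) (hacyc : (G.induce (D \ S)).IsAcyclic)
    (hD : ∀ x ∈ D, ∀ z ∈ Z, G.Adj z x → z ∈ D)
    {ι : Type*} (s : Finset ι) (A : ι → Set V) (hAD : ∀ i ∈ s, A i ⊆ D)
    (hAZ : ∀ i ∈ s, Disjoint (A i) Z) (hconn : ∀ i ∈ s, (G.induce (A i)).Connected)
    (hdisj : (s : Set ι).PairwiseDisjoint A)
    (hmany : ∀ i ∈ s, d + 2 ≤ {z ∈ Z | ∃ x ∈ A i, G.Adj z x}.ncard) :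
    s.card ≤ (Z ∩ D).ncard := by
  classical
  set s₁ := s.filter fun i => ¬Disjoint (A i) S
  set s₂ := s.filter fun i => Disjoint (A i) S
  have hs : s₁.card + s₂.card = s.card := by
    rw [add_comm]
    exact Finset.card_filter_add_card_filter_not _
  have hdisj₁ : (s₁ : Set ι).PairwiseDisjoint A :=
    hdisj.subset (Finset.coe_subset.2 (Finset.filter_subset _ _))
  have hs₁ : s₁.card ≤ (S \ Z).ncard := by
    rw [← Set.ncard_coe_finset]
    refine hdisj₁.ncard_le_ncard_of_inter_nonempty (fun i hi => ?_) (Set.toFinite _)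
    obtain ⟨his, hiS⟩ := Finset.mem_filter.1 hi
    obtain ⟨v, hvA, hvS⟩ := Set.not_disjoint_iff.1 hiS
    exact ⟨v, hvA, hvS, Set.disjoint_left.1 (hAZ i his) hvA⟩
  have hs₂ := card_mul_le_of_isAcyclic_diff hacyc hD s₂ A
    (fun i hi v hv => ⟨hAD i (Finset.mem_filter.1 hi).1 hv,
      Set.disjoint_left.1 (Finset.mem_filter.1 hi).2 hv⟩)
    (fun i hi => hAZ i (Finset.mem_of_mem_filter i hi))
    (fun i hi => hconn i (Finset.mem_of_mem_filter i hi))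
    (hdisj.subset (Finset.coe_subset.2 (Finset.filter_subset _ _)))
    (fun i hi => hmany i (Finset.mem_of_mem_filter i hi))
  have hZD : (Z ∩ S).ncard + ((Z ∩ D) \ S).ncard = (Z ∩ D).ncard := by
    rw [← Set.ncard_inter_add_ncard_sdiff_eq_ncard (Z ∩ D) S, Set.inter_assoc,
      Set.inter_eq_right.2 hSD]
  have hSZ : (Z ∩ S).ncard + (S \ Z).ncard ≤ d := by
    rwa [Set.inter_comm, Set.ncard_inter_add_ncard_sdiff_eq_ncard]
  obtain rfl | ⟨i, hi⟩ := s.eq_empty_or_nonempty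
  · simp
  have hZD_big : d + 2 ≤ (Z ∩ D).ncard := by
    refine (hmany i hi).trans (Set.ncard_le_ncard ?_)
    rintro z ⟨hz, x, hx, hadj⟩
    exact ⟨hz, hD x (hAD i hi hx) z hz hadj⟩
  -- If `s₂ ≠ ∅`, then `|s₂| + |S \ Z| ≤ |s₂| (|S \ Z| + 1) ≤ |s₂| (d + 1 - |Z ∩ S|)`,
  -- which is at most `|(Z ∩ D) \ S|`; otherwise `|s₁| ≤ d < |Z ∩ D|`.
  nlinarith

noncomputable def induceInduceIso (G : SimpleGraph V) (s : Set V) (t : Set s) :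
    (G.induce s).induce t ≃g G.induce (Subtype.val '' t) where
  toEquiv := Equiv.Set.image Subtype.val t Subtype.val_injective
  map_rel_iff' := Iff.rfl

namespace ConnectedComponent

variable {s : Set V}

theorem connected_induce_image_supp (c : (G.induce s).ConnectedComponent) :
    (G.induce (Subtype.val '' c.supp)).Connected :=
  (induceInduceIso G s c.supp).connected_iff.1 c.connected_toSimpleGraph

theorem pairwiseDisjoint_image_supp (t : Set (G.induce s).ConnectedComponent) :
    t.PairwiseDisjoint fun c => Subtype.val '' c.supp :=
  fun _ _ _ _ h => (Set.disjoint_image_iff Subtype.val_injective).2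
    (pairwise_disjoint_supp_connectedComponent _ h)

theorem mem_image_supp_of_adj_s10 {c : (G.induce s).ConnectedComponent} {x z : V}
    (hx : x ∈ Subtype.val '' c.supp) (hz : z ∈ s) (hadj : G.Adj z x) :
    z ∈ Subtype.val '' c.supp := by
  obtain ⟨x, hxc, rfl⟩ := hx
  have hadj' : (G.induce s).Adj x ⟨z, hz⟩ := hadj.symm
  exact ⟨⟨z, hz⟩, c.mem_supp_of_adj_mem_supp hxc hadj', rfl⟩

theorem exists_subset_image_supp {A : Set V} (hA : (G.induce A).Connected) (hAs : A ⊆ s) :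
    ∃ c : (G.induce s).ConnectedComponent, A ⊆ Subtype.val '' c.supp := by
  obtain ⟨a, ha⟩ := hA.nonempty
  refine ⟨(G.induce s).connectedComponentMk ⟨a, hAs ha⟩,
    fun b hb => ⟨⟨b, hAs hb⟩, ?_, rfl⟩⟩
  exact ConnectedComponent.sound
    ((hA.preconnected ⟨b, hb⟩ ⟨a, ha⟩).map (induceHomOfLE G hAs).toHom)

end ConnectedComponent

theorem _root_.IsDQuasiForest.exists_isAcyclic_induce_diff {s : Set V} {d : ℕ}
    (h : IsDQuasiForest (G.induce s) d) (c : (G.induce s).ConnectedComponent) :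
    ∃ S ⊆ Subtype.val '' c.supp, S.ncard ≤ d ∧
      (G.induce (Subtype.val '' c.supp \ S)).IsAcyclic := by
  obtain ⟨S, hS, hSc, hacyc⟩ := h c
  refine ⟨Subtype.val '' S, Set.image_mono hSc, ?_, ?_⟩
  · rwa [Set.ncard_image_of_injective _ Subtype.val_injective, Set.ncard_coe_finset]
  · rw [← Set.image_sdiff Subtype.val_injective]
    exact (induceInduceIso G s _).isAcyclic_iff.1 hacyc

open ConnectedComponent in
theorem ncard_components_disjoint_many_neighbors_le [Finite V] {X Z : Set V} {d : ℕ}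
    (hXZ : X ⊆ Zᶜ) (hX : IsDQuasiForest (G.induce Xᶜ) d) :
    {c : (G.induce Zᶜ).ConnectedComponent | Disjoint (Subtype.val '' c.supp) X ∧
      d + 2 ≤ {z ∈ Z | ∃ x ∈ c.supp, G.Adj z ↑x}.ncard}.ncard ≤ Z.ncard := by
  classical
  cases nonempty_fintype V
  set 𝒞 := {c : (G.induce Zᶜ).ConnectedComponent | Disjoint (Subtype.val '' c.supp) X ∧
      d + 2 ≤ {z ∈ Z | ∃ x ∈ c.supp, G.Adj z ↑x}.ncard}
  set A : (G.induce Zᶜ).ConnectedComponent → Set V := fun c => Subtype.val '' c.supp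
  set fib : (G.induce Xᶜ).ConnectedComponent → Finset (G.induce Zᶜ).ConnectedComponent :=
    fun D => 𝒞.toFinset.filter fun c => A c ⊆ Subtype.val '' D.supp
  have hcover : 𝒞.toFinset ⊆ Finset.univ.biUnion fib := by
    intro c hc
    rw [Set.mem_toFinset] at hc
    obtain ⟨D, hD⟩ := exists_subset_image_supp c.connected_induce_image_supp
      (Set.subset_compl_iff_disjoint_right.2 hc.1)
    exact Finset.mem_biUnion.2
      ⟨D, Finset.mem_univ _, Finset.mem_filter.2 ⟨Set.mem_toFinset.2 hc, hD⟩⟩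
  have hfib : ∀ D, (fib D).card ≤ (Z ∩ Subtype.val '' D.supp).ncard := by
    intro D
    obtain ⟨S, hSD, hS, hacyc⟩ := hX.exists_isAcyclic_induce_diff D
    refine ncard_le_ncard_inter_of_isAcyclic_diff hSD hS hacyc
      (fun x hx z hz hadj => mem_image_supp_of_adj_s10 hx (fun hzX => hXZ hzX hz) hadj) (fib D) A
      (fun c hc => (Finset.mem_filter.1 hc).2)
      (fun c _ => Set.disjoint_left.2 fun _ ⟨x, _, hx⟩ => hx ▸ x.2)
      (fun c _ => c.connected_induce_image_supp) (pairwiseDisjoint_image_supp _)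
      (fun c hc => ?_)
    simpa only [A, Set.exists_mem_image] using (Set.mem_toFinset.1 (Finset.mem_filter.1 hc).1).2
  calc 𝒞.ncard = 𝒞.toFinset.card := Set.ncard_eq_toFinset_card' _
    _ ≤ (Finset.univ.biUnion fib).card := Finset.card_le_card hcover
    _ ≤ ∑ D, (fib D).card := Finset.card_biUnion_le
    _ ≤ ∑ D, (Z ∩ Subtype.val '' D.supp).ncard := Finset.sum_le_sum fun D _ => hfib D
    _ ≤ Z.ncard :=
      (pairwiseDisjoint_image_supp _).sum_ncard_inter_le (Set.toFinite Z)

end SimpleGraph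

theorem few_components_with_many_neighbors_general {V : Type*} [Fintype V] (G : SimpleGraph V)
    (k d : ℕ) (Z : Set V) (hZcard : Z.ncard ≤ k + 1)
    (h : ∃ X : Set V, X ⊆ Zᶜ ∧ X.ncard ≤ k ∧ IsDQuasiForest (G.induce Xᶜ) d) :
    {c : (G.induce Zᶜ).ConnectedComponent |
      d + 2 ≤ {z ∈ Z | ∃ x ∈ c.supp, G.Adj z ↑x}.ncard}.ncard
      ≤ 2 * (k + 1) + d := by
  obtain ⟨X, hXZ, hXk, hX⟩ := h
  have hmeet : {c : (G.induce Zᶜ).ConnectedComponent |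
      ¬Disjoint (Subtype.val '' c.supp) X}.ncard ≤ X.ncard :=
    Set.PairwiseDisjoint.ncard_le_ncard_of_inter_nonempty
      (SimpleGraph.ConnectedComponent.pairwiseDisjoint_image_supp _)
      (fun _ hc => Set.not_disjoint_iff_nonempty_inter.1 hc) (Set.toFinite X)
  have havoid := SimpleGraph.ncard_components_disjoint_many_neighbors_le hXZ hX
  calc _ ≤ ({c : (G.induce Zᶜ).ConnectedComponent | ¬Disjoint (Subtype.val '' c.supp) X} ∪
        {c | Disjoint (Subtype.val '' c.supp) X ∧
          d + 2 ≤ {z ∈ Z | ∃ x ∈ c.supp, G.Adj z ↑x}.ncard}).ncard :=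
        Set.ncard_le_ncard fun c hc => (em _).elim (fun h => Or.inr ⟨h, hc⟩) Or.inl
    _ ≤ _ := Set.ncard_union_le _ _
    _ ≤ 2 * (k + 1) + d := by omega

/-- Let `|Z| ≤ k + 1` with `G − Z` a `d`-quasi-forest. If there is `X ⊆ V(G) ∖ Z` with
`|X| ≤ k` such that `G − X` is a `d`-quasi-forest, then at most `2(k + 1) + d` connected
components of `G − Z` have at least `d + 2` neighbors in `Z`. -/
theorem few_components_with_many_neighbors {V : Type*} [Fintype V] (G : SimpleGraph V)
    (k d : ℕ) (Z : Set V) (hZcard : Z.ncard ≤ k + 1)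
    (hZ : IsDQuasiForest (G.induce Zᶜ) d)
    (h : ∃ X : Set V, X ⊆ Zᶜ ∧ X.ncard ≤ k ∧ IsDQuasiForest (G.induce Xᶜ) d) :
    {c : (G.induce Zᶜ).ConnectedComponent |
      d + 2 ≤ {z ∈ Z | ∃ x ∈ c.supp, G.Adj z ↑x}.ncard}.ncard
      ≤ 2 * (k + 1) + d :=
  few_components_with_many_neighbors_general G k d Z hZcard h
end

section
/- Let G be a finite simple graph, d a non-negative integer, and u ≠ v two vertices of G joined by d + 2 pairwise internally vertex-disjoint paths. Then every set S ⊆ V(G) with |S| ≤ d such that G − S is acyclic contains u or contains v. -/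
/-!
If `u, v ∉ S`, each vertex of `S` is an inner vertex of at most one of the internally disjoint
paths, so at most `|S| ≤ d` of the `d + 2` paths meet `S`. Two of them therefore survive in
`G − S`, and they are distinct `u`–`v` paths in a forest, which is impossible.
-/

namespace SimpleGraph

variable {V : Type*} {G : SimpleGraph V} {u v : V}

theorem IsAcyclic.path_eq_of_support_subset {s : Set V} (hac : (G.induce s).IsAcyclic)
    (p q : G.Path u v) (hp : ∀ x ∈ p.1.support, x ∈ s) (hq : ∀ x ∈ q.1.support, x ∈ s) :
    p = q := by
  have hp' : (p.1.induce s hp).IsPath := .of_map (by rw [Walk.map_induce]; exact p.2)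
  have hq' : (q.1.induce s hq).IsPath := .of_map (by rw [Walk.map_induce]; exact q.2)
  have hpq : p.1.induce s hp = q.1.induce s hq :=
    congrArg Subtype.val ((hac.subsingleton_path _ _).elim ⟨_, hp'⟩ ⟨_, hq'⟩)
  have := congrArg (Walk.map (Embedding.induce s).toHom) hpq
  rw [Walk.map_induce, Walk.map_induce] at this
  exact Subtype.ext this

theorem ncard_paths_meeting_le {ι : Type*} (p : ι → G.Path u v)
    (hdisj : ∀ i j, i ≠ j →
      ∀ x, x ∈ (p i).1.support → x ∈ (p j).1.support → x = u ∨ x = v)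
    {S : Set V} (hS : S.Finite) (hu : u ∉ S) (hv : v ∉ S) :
    {i | ∃ x ∈ S, x ∈ (p i).1.support}.ncard ≤ S.ncard := by
  classical
  set B := {i | ∃ x ∈ S, x ∈ (p i).1.support}
  let f : ι → V := fun i => if h : i ∈ B then h.choose else u
  have hf : ∀ i (hi : i ∈ B), f i = hi.choose := fun i hi => dif_pos hi
  refine Set.ncard_le_ncard_of_injOn f (fun i hi => hf i hi ▸ hi.choose_spec.1) ?_ hS
  intro i hi j hj hij
  by_contra hne
  rw [hf i hi, hf j hj] at hij
  have hS_mem : hi.choose ∈ S := hi.choose_spec.1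
  rcases hdisj i j hne _ hi.choose_spec.2 (hij ▸ hj.choose_spec.2) with h | h <;>
    rw [h] at hS_mem
  exacts [hu hS_mem, hv hS_mem]

end SimpleGraph

open SimpleGraph in
theorem mem_of_many_disjoint_paths_general {V : Type*} [Fintype V] (G : SimpleGraph V) (d : ℕ)
    (u v : V)
    (p : Fin (d + 2) → G.Path u v) (hdist : Function.Injective p)
    (hdisj : ∀ i j, i ≠ j →
      ∀ x, x ∈ (p i).1.support → x ∈ (p j).1.support → x = u ∨ x = v)
    (S : Set V) (hS : S.ncard ≤ d) (hac : (G.induce Sᶜ).IsAcyclic) :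
    u ∈ S ∨ v ∈ S := by
  by_contra! ⟨hu, hv⟩
  set B := {i | ∃ x ∈ S, x ∈ (p i).1.support}
  have hB : B.ncard ≤ d := (ncard_paths_meeting_le p hdisj S.toFinite hu hv).trans hS
  have hBc : 1 < Bᶜ.ncard := by
    have := Set.ncard_add_ncard_compl B
    rw [Nat.card_eq_fintype_card, Fintype.card_fin] at this
    omega
  obtain ⟨i, hi, j, hj, hij⟩ := (Set.one_lt_ncard Bᶜ.toFinite).mp hBc
  have avoids : ∀ k ∈ Bᶜ, ∀ x ∈ (p k).1.support, x ∈ Sᶜ := fun k hk x hx hxS => hk ⟨x, hxS, hx⟩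
  exact hij (hdist (hac.path_eq_of_support_subset _ _ (avoids i hi) (avoids j hj)))

/-- If `u ≠ v` are joined by `d + 2` pairwise internally vertex-disjoint (distinct) paths,
then every set `S` of at most `d` vertices such that `G − S` is acyclic contains `u`
or contains `v`. -/
theorem mem_of_many_disjoint_paths {V : Type*} [Fintype V] (G : SimpleGraph V) (d : ℕ)
    (u v : V) (huv : u ≠ v)
    (p : Fin (d + 2) → G.Path u v) (hdist : Function.Injective p)
    (hdisj : ∀ i j, i ≠ j →
      ∀ x, x ∈ (p i).1.support → x ∈ (p j).1.support → x = u ∨ x = v)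
    (S : Set V) (hS : S.ncard ≤ d) (hac : (G.induce Sᶜ).IsAcyclic) :
    u ∈ S ∨ v ∈ S :=
  mem_of_many_disjoint_paths_general G d u v p hdist hdisj S hS hac
end

section
/- Let G be a finite simple graph, k, d non-negative integers, Z ⊆ V(G), and u ∈ Z. Suppose there exist k + d + 1 pairwise vertex-disjoint paths in G − Z, each of which joins two distinct neighbors of u in G. Then for every X ⊆ V(G) ∖ Z with |X| ≤ k such that G − X is a d-quasi-forest, every feedback vertex set of size at most d of the connected component of u in G − X contains u. -/
/-!
At most `k + d` vertices lie in `X ∪ S`, so one of the `k + d + 1` disjoint paths avoids both.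
Closed up through `u`, it is a cycle in `G − X` (hence inside the component of `u`) that avoids
`S` if `u ∉ S`, contradicting that `S` is a feedback vertex set of that component.
-/

open Function in
theorem Set.exists_disjoint_of_ncard_lt {α ι : Type*} [Finite ι] {s : ι → Set α}
    (hs : Pairwise (Disjoint on s)) {t : Set α} (ht : t.Finite) (hcard : t.ncard < Nat.card ι) :
    ∃ i, Disjoint (s i) t := by
  by_contra! hmeet
  simp only [Set.not_disjoint_iff] at hmeet
  choose f hfs hft using hmeet
  have hinj : Function.Injective f := fun i j hij => by
    by_contra hne
    exact Set.disjoint_left.1 (hs hne) (hfs i) (hij ▸ hfs j)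
  have := Set.ncard_le_ncard_of_injOn (s := Set.univ) f (fun i _ => hft i) hinj.injOn ht
  rw [Set.ncard_univ] at this
  omega

namespace SimpleGraph

variable {V : Type*} {G : SimpleGraph V}

namespace Walk

theorem IsPath.isCycle_cons_concat {u a b : V} {p : G.Walk a b} (hp : p.IsPath) (hab : a ≠ b)
    (hua : G.Adj u a) (hub : G.Adj u b) (hu : u ∉ p.support) :
    (cons hua (p.concat hub.symm)).IsCycle := by
  rw [cons_isCycle_iff, concat_isPath_iff, edges_concat, List.concat_eq_append]
  refine ⟨⟨hp, hu⟩, fun h => ?_⟩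
  rcases List.mem_append.1 h with h | h
  · exact hu (p.fst_mem_support_of_mem_edges h)
  · rcases Sym2.eq_iff.1 (List.mem_singleton.1 h) with ⟨rfl, -⟩ | ⟨-, rfl⟩
    · exact hu p.end_mem_support
    · exact hab rfl

theorem mem_supp_connectedComponentMk_induce {s : Set V} {x y : V} (w : G.Walk x y)
    (hw : ∀ v ∈ w.support, v ∈ s) {v : V} (hv : v ∈ w.support) :
    ⟨v, hw v hv⟩ ∈
      ((G.induce s).connectedComponentMk ⟨x, hw x w.start_mem_support⟩).supp := by
  classical
  rw [ConnectedComponent.mem_supp_iff, ConnectedComponent.eq]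
  exact ⟨((w.takeUntil v hv).induce s
    fun z hz => hw z (w.support_takeUntil_subset_support hv hz)).reverse⟩

theorem IsCycle.not_isAcyclic_induce {s : Set V} {v : V} {c : G.Walk v v} (hc : c.IsCycle)
    (hs : ∀ x ∈ c.support, x ∈ s) : ¬(G.induce s).IsAcyclic :=
  fun hacyc => hacyc (c.induce s hs)
    (IsCycle.of_map (f := (Embedding.induce s).toHom) (by rwa [map_induce]))

end Walk

end SimpleGraph

theorem forced_in_every_fvs_general {V : Type*} [Fintype V] (G : SimpleGraph V)
    (k d : ℕ) (Z : Set V) (u : V) (hu : u ∈ Z)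
    (hpaths : ∃ (a b : Fin (k + d + 1) → V) (p : ∀ i, G.Walk (a i) (b i)),
      (∀ i, a i ≠ b i) ∧ (∀ i, G.Adj u (a i)) ∧ (∀ i, G.Adj u (b i)) ∧
      (∀ i, (p i).IsPath) ∧ (∀ i, ∀ x ∈ (p i).support, x ∉ Z) ∧
      (∀ i j, i ≠ j → ∀ x, x ∈ (p i).support → x ∉ (p j).support))
    (X : Set V) (hXZ : X ⊆ Zᶜ) (hXk : X.ncard ≤ k)
    (S : Set V) (hSd : S.ncard ≤ d)
    (hSfvs : (G.induce ((Subtype.val ''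
      ((G.induce Xᶜ).connectedComponentMk ⟨u, fun h => hXZ h hu⟩).supp) \ S)).IsAcyclic) :
    u ∈ S := by
  by_contra huS
  obtain ⟨a, b, p, hab, hua, hub, hp, hpZ, hdisj⟩ := hpaths
  obtain ⟨i, hi⟩ := Set.exists_disjoint_of_ncard_lt (s := fun i => {x | x ∈ (p i).support})
    (fun i j hij => Set.disjoint_left.2 (hdisj i j hij)) (Set.toFinite (X ∪ S))
    (by rw [Nat.card_fin]; exact (Set.ncard_union_le X S).trans_lt (by omega))
  obtain ⟨hiX, hiS⟩ := Set.disjoint_union_right.1 hi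
  have hiu : u ∉ (p i).support := fun h => hpZ i u h hu
  set c := SimpleGraph.Walk.cons (hua i) ((p i).concat (hub i).symm)
  have hc : c.IsCycle := (hp i).isCycle_cons_concat (hab i) (hua i) (hub i) hiu
  have hc_supp : ∀ v ∈ c.support, v = u ∨ v ∈ (p i).support := by
    simp [c, SimpleGraph.Walk.support_concat, or_comm]
  have hcX : ∀ v ∈ c.support, v ∈ Xᶜ := fun v hv => by
    rcases hc_supp v hv with rfl | h
    · exact fun huX => hXZ huX hu
    · exact Set.disjoint_left.1 hiX h
  refine hc.not_isAcyclic_induce (fun v hv => ?_) hSfvs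
  refine ⟨⟨⟨v, hcX v hv⟩,
    SimpleGraph.Walk.mem_supp_connectedComponentMk_induce c hcX hv, rfl⟩, ?_⟩
  rcases hc_supp v hv with rfl | h
  · exact huS
  · exact Set.disjoint_left.1 hiS h

/-- Let `u ∈ Z` and suppose there are `k + d + 1` pairwise vertex-disjoint paths in
`G − Z`, each joining two distinct neighbors of `u` in `G`. Then for every
`X ⊆ V(G) ∖ Z` with `|X| ≤ k` such that `G − X` is a `d`-quasi-forest, every feedback
vertex set of size at most `d` of the connected component of `u` in `G − X`
contains `u`. -/
theorem forced_in_every_fvs {V : Type*} [Fintype V] (G : SimpleGraph V)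
    (k d : ℕ) (Z : Set V) (u : V) (hu : u ∈ Z)
    (hpaths : ∃ (a b : Fin (k + d + 1) → V) (p : ∀ i, G.Walk (a i) (b i)),
      (∀ i, a i ≠ b i) ∧ (∀ i, G.Adj u (a i)) ∧ (∀ i, G.Adj u (b i)) ∧
      (∀ i, (p i).IsPath) ∧ (∀ i, ∀ x ∈ (p i).support, x ∉ Z) ∧
      (∀ i j, i ≠ j → ∀ x, x ∈ (p i).support → x ∉ (p j).support))
    (X : Set V) (hXZ : X ⊆ Zᶜ) (hXk : X.ncard ≤ k)
    (hq : IsDQuasiForest (G.induce Xᶜ) d)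
    (S : Set V) (hSd : S.ncard ≤ d)
    (hScomp : S ⊆ Subtype.val ''
      ((G.induce Xᶜ).connectedComponentMk ⟨u, fun h => hXZ h hu⟩).supp)
    (hSfvs : (G.induce ((Subtype.val ''
      ((G.induce Xᶜ).connectedComponentMk ⟨u, fun h => hXZ h hu⟩).supp) \ S)).IsAcyclic) :
    u ∈ S :=
  forced_in_every_fvs_general G k d Z u hu hpaths X hXZ hXk S hSd hSfvs
end
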